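/- Define, for f : ℤ → ℝ nonnegative, the ceiling-free discrete nontangential maximal function 𝓝 f(x) = sup { (1/(2R+1)) Σ_{i=y−R}^{y+R} f(i) : R ∈ ℕ, y ∈ ℤ, 3|x − y| ≤ R }. Let f be the indicator function of the set {0, 4} ⊆ ℤ. Then 𝓝 f(2) = 2/5 and 𝓝 f(1) = 𝓝 f(3) = 1/3; in particular 2 is a strict local maximum point of 𝓝 f, while f takes no value equal to 2/5. -/
import Mathlib


/-- The ceiling-free discrete nontangential maximal function at parameter `α = 1/3`:
`𝓝 f(x) = sup { (1/(2R+1)) Σ_{i=y−R}^{y+R} f(i) : R ∈ ℕ, y ∈ ℤ, 3|x − y| ≤ R }`. -/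
noncomputable def dntMaxCF (f : ℤ → ℝ) (x : ℤ) : ℝ :=
  sSup { a : ℝ | ∃ R : ℕ, ∃ y : ℤ, 3 * |x - y| ≤ (R : ℤ) ∧
    a = (1 / (2 * (R : ℝ) + 1)) * ∑ i ∈ Finset.Icc (y - (R : ℤ)) (y + (R : ℤ)), f i }

/-- The indicator function of `{0, 4} ⊆ ℤ`. -/
noncomputable def indic04 : ℤ → ℝ := fun n => if n = 0 ∨ n = 4 then 1 else 0

lemma sum_indic (s : Finset ℤ) :
    ∑ i ∈ s, indic04 i
      = (if (0:ℤ) ∈ s then (1:ℝ) else 0) + (if (4:ℤ) ∈ s then (1:ℝ) else 0) := by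
  have h : ∀ i ∈ s, indic04 i
      = (if i = (0:ℤ) then (1:ℝ) else 0) + (if i = (4:ℤ) then (1:ℝ) else 0) := by
    intro i _
    by_cases h0 : i = 0
    · subst h0; simp [indic04]
    · by_cases h4 : i = 4
      · subst h4; simp [indic04]
      · simp [indic04, h0, h4]
  rw [Finset.sum_congr rfl h, Finset.sum_add_distrib,
    Finset.sum_ite_eq' s (0:ℤ) (fun _ => (1:ℝ)),
    Finset.sum_ite_eq' s (4:ℤ) (fun _ => (1:ℝ))]

lemma avg_le {c B R : ℝ} (hR : 0 < 2*R+1) (h : c ≤ B * (2*R+1)) :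
    (1/(2*R+1))*c ≤ B := by
  rw [one_div, inv_mul_eq_div, div_le_iff₀ hR]; exact h

lemma ub_aux (x : ℤ) (B : ℝ) (hB : 0 ≤ B)
    (H1 : ∀ R : ℕ, ∀ y : ℤ, 3 * |x - y| ≤ (R:ℤ) →
      ((y - R ≤ 0 ∧ 0 ≤ y + R) ∨ (y - R ≤ 4 ∧ 4 ≤ y + R)) → (1:ℝ) ≤ B * (2*R+1))
    (H2 : ∀ R : ℕ, ∀ y : ℤ, 3 * |x - y| ≤ (R:ℤ) →
      (y - R ≤ 0 ∧ 0 ≤ y + R) → (y - R ≤ 4 ∧ 4 ≤ y + R) → (2:ℝ) ≤ B * (2*R+1)) :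
    ∀ a ∈ { a : ℝ | ∃ R : ℕ, ∃ y : ℤ, 3 * |x - y| ≤ (R : ℤ) ∧
      a = (1 / (2 * (R : ℝ) + 1)) * ∑ i ∈ Finset.Icc (y - (R : ℤ)) (y + (R : ℤ)), indic04 i },
    a ≤ B := by
  rintro a ⟨R, y, hRy, ha⟩
  rw [sum_indic] at ha
  simp only [Finset.mem_Icc] at ha
  have hpos : (0:ℝ) < 2*(R:ℝ)+1 := by positivity
  split_ifs at ha with h0 h4 h4'
  · rw [ha]; refine avg_le hpos ?_
    have := H2 R y hRy h0 h4; linarith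
  · rw [ha]; refine avg_le hpos ?_
    have := H1 R y hRy (Or.inl h0); linarith
  · rw [ha]; refine avg_le hpos ?_
    have := H1 R y hRy (Or.inr h4'); linarith
  · rw [ha]; simpa using hB

/-- For `f` the indicator of `{0,4}`, the ceiling-free maximal function satisfies
`𝓝 f(2) = 2/5` and `𝓝 f(1) = 𝓝 f(3) = 1/3`; in particular `2` is a strict local maximum
point of `𝓝 f`, while `f` never takes the value `2/5`. -/
theorem dntMaxCF_counterexample :
    dntMaxCF indic04 2 = 2 / 5 ∧
    dntMaxCF indic04 1 = 1 / 3 ∧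
    dntMaxCF indic04 3 = 1 / 3 ∧
    dntMaxCF indic04 1 < dntMaxCF indic04 2 ∧
    dntMaxCF indic04 3 < dntMaxCF indic04 2 ∧
    ∀ n : ℤ, indic04 n ≠ 2 / 5 := by
  have hub2 := ub_aux 2 (2/5) (by norm_num)
    (by
      intro R y h hd
      have hR : (1:ℕ) ≤ R := by
        rcases abs_cases ((2:ℤ) - y) with ⟨he, _⟩ | ⟨he, _⟩ <;> rw [he] at h <;> omega
      have : (1:ℝ) ≤ (R:ℝ) := by exact_mod_cast hR
      linarith)
    (by
      intro R y h h0 h4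
      have hR : (2:ℕ) ≤ R := by
        rcases abs_cases ((2:ℤ) - y) with ⟨he, _⟩ | ⟨he, _⟩ <;> rw [he] at h <;> omega
      have : (2:ℝ) ≤ (R:ℝ) := by exact_mod_cast hR
      linarith)
  have hub1 := ub_aux 1 (1/3) (by norm_num)
    (by
      intro R y h hd
      have hR : (1:ℕ) ≤ R := by
        rcases abs_cases ((1:ℤ) - y) with ⟨he, _⟩ | ⟨he, _⟩ <;> rw [he] at h <;> omega
      have : (1:ℝ) ≤ (R:ℝ) := by exact_mod_cast hR
      linarith)
    (by
      intro R y h h0 h4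
      have hR : (3:ℕ) ≤ R := by
        rcases abs_cases ((1:ℤ) - y) with ⟨he, _⟩ | ⟨he, _⟩ <;> rw [he] at h <;> omega
      have : (3:ℝ) ≤ (R:ℝ) := by exact_mod_cast hR
      linarith)
  have hub3 := ub_aux 3 (1/3) (by norm_num)
    (by
      intro R y h hd
      have hR : (1:ℕ) ≤ R := by
        rcases abs_cases ((3:ℤ) - y) with ⟨he, _⟩ | ⟨he, _⟩ <;> rw [he] at h <;> omega
      have : (1:ℝ) ≤ (R:ℝ) := by exact_mod_cast hR
      linarith)
    (by
      intro R y h h0 h4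
      have hR : (3:ℕ) ≤ R := by
        rcases abs_cases ((3:ℤ) - y) with ⟨he, _⟩ | ⟨he, _⟩ <;> rw [he] at h <;> omega
      have : (3:ℝ) ≤ (R:ℝ) := by exact_mod_cast hR
      linarith)
  have hm2 : (2/5 : ℝ) ∈ { a : ℝ | ∃ R : ℕ, ∃ y : ℤ, 3 * |(2:ℤ) - y| ≤ (R : ℤ) ∧
      a = (1 / (2 * (R : ℝ) + 1)) * ∑ i ∈ Finset.Icc (y - (R : ℤ)) (y + (R : ℤ)), indic04 i } := by
    refine ⟨2, 2, by simp, ?_⟩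
    rw [sum_indic]
    norm_num [Finset.mem_Icc]
  have hm1 : (1/3 : ℝ) ∈ { a : ℝ | ∃ R : ℕ, ∃ y : ℤ, 3 * |(1:ℤ) - y| ≤ (R : ℤ) ∧
      a = (1 / (2 * (R : ℝ) + 1)) * ∑ i ∈ Finset.Icc (y - (R : ℤ)) (y + (R : ℤ)), indic04 i } := by
    refine ⟨1, 1, by simp, ?_⟩
    rw [sum_indic]
    norm_num [Finset.mem_Icc]
  have hm3 : (1/3 : ℝ) ∈ { a : ℝ | ∃ R : ℕ, ∃ y : ℤ, 3 * |(3:ℤ) - y| ≤ (R : ℤ) ∧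
      a = (1 / (2 * (R : ℝ) + 1)) * ∑ i ∈ Finset.Icc (y - (R : ℤ)) (y + (R : ℤ)), indic04 i } := by
    refine ⟨1, 3, by simp, ?_⟩
    rw [sum_indic]
    norm_num [Finset.mem_Icc]
  have e2 : dntMaxCF indic04 2 = 2/5 :=
    le_antisymm (Real.sSup_le hub2 (by norm_num)) (le_csSup ⟨2/5, hub2⟩ hm2)
  have e1 : dntMaxCF indic04 1 = 1/3 :=
    le_antisymm (Real.sSup_le hub1 (by norm_num)) (le_csSup ⟨1/3, hub1⟩ hm1)
  have e3 : dntMaxCF indic04 3 = 1/3 :=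
    le_antisymm (Real.sSup_le hub3 (by norm_num)) (le_csSup ⟨1/3, hub3⟩ hm3)
  refine ⟨e2, e1, e3, by rw [e1, e2]; norm_num, by rw [e3, e2]; norm_num, ?_⟩
  intro n
  unfold indic04
  split_ifs <;> norm_num
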